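/- arXiv:2601.19471 — 2 statements merged into one kernel-verified Lean document; each statement's English description precedes it below -/
import Mathlib

section
/- Let X be a nonempty compact topological space, φ a flow on X, and c a positive continuous cocycle over φ. Then for every x ∈ X, the map t ↦ c(x,t) is a strictly increasing continuous bijection from ℝ onto ℝ. -/
/-- For a positive continuous cocycle `c` over a flow `φ` on a nonempty compact space,
each map `t ↦ c (x, t)` is a strictly increasing continuous bijection of `ℝ`. -/
theorem cocycle_strictMono_bijective
    {X : Type*} [TopologicalSpace X] [CompactSpace X] [Nonempty X]
    (φ : Flow ℝ X) (c : X × ℝ → ℝ) (hc : Continuous c)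
    (hcoc : ∀ (x : X) (s t : ℝ), c (x, s + t) = c (φ t x, s) + c (x, t))
    (hpos : ∀ (x : X) (t : ℝ), 0 < t → 0 < c (x, t)) (x : X) :
    StrictMono (fun t => c (x, t)) ∧ Continuous (fun t => c (x, t)) ∧
      Function.Bijective (fun t => c (x, t)) := by
  -- basic facts
  have hzero : ∀ y : X, c (y, 0) = 0 := by
    intro y
    have := hcoc y 0 0
    simp at this
    linarith [this]
  have hmono : StrictMono (fun t => c (x, t)) := by
    intro s t hst
    have h := hcoc x (t - s) s
    simp only [sub_add_cancel] at h
    have := hpos (φ s x) (t - s) (by linarith)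
    simp only
    linarith
  have hcont : Continuous (fun t => c (x, t)) :=
    hc.comp (by continuity)
  refine ⟨hmono, hcont, hmono.injective, ?_⟩
  -- minimum of y ↦ c (y, 1) over compact X
  obtain ⟨y₀, -, hy₀⟩ := isCompact_univ.exists_isMinOn Set.univ_nonempty
    ((hc.comp (by continuity : Continuous fun y : X => (y, (1:ℝ)))).continuousOn)
  set m := c (y₀, 1) with hm
  have hmpos : 0 < m := hpos y₀ 1 one_pos
  have hmin : ∀ y : X, m ≤ c (y, 1) := fun y => hy₀ (Set.mem_univ y)
  -- c (y, n) ≥ n * m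
  have hlow : ∀ (y : X) (n : ℕ), (n : ℝ) * m ≤ c (y, (n : ℝ)) := by
    intro y n
    induction n with
    | zero => simp [hzero]
    | succ n ih =>
      have h := hcoc y 1 n
      push_cast
      have := hmin (φ (n : ℝ) y)
      have : c (y, (n : ℝ) + 1) = c (φ (n : ℝ) y, 1) + c (y, (n : ℝ)) := by
        rw [add_comm ((n : ℝ)) 1]; exact h
      rw [this]
      have := hmin (φ (n : ℝ) y)
      nlinarith
  -- c (x, -n) ≤ -(n * m)
  have hneg : ∀ n : ℕ, c (x, -(n : ℝ)) ≤ -((n : ℝ) * m) := by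
    intro n
    have h := hcoc x (n : ℝ) (-(n : ℝ))
    simp only [add_neg_cancel] at h
    rw [hzero] at h
    have := hlow (φ (-(n : ℝ)) x) n
    linarith
  -- surjectivity via IVT
  have htop : Filter.Tendsto (fun t => c (x, t)) Filter.atTop Filter.atTop := by
    apply Filter.tendsto_atTop_atTop_of_monotone' hmono.monotone
    rintro ⟨B, hB⟩
    obtain ⟨n, hn⟩ := Archimedean.arch (B + 1) hmpos
    have h1 : c (x, (n : ℝ)) ≤ B := hB (Set.mem_range_self _)
    have h2 := hlow x n
    simp only [nsmul_eq_mul] at hn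
    nlinarith
  have hbot : Filter.Tendsto (fun t => c (x, t)) Filter.atBot Filter.atBot := by
    apply Filter.tendsto_atBot_atBot_of_monotone' hmono.monotone
    rintro ⟨B, hB⟩
    obtain ⟨n, hn⟩ := Archimedean.arch (1 - B) hmpos
    have h1 : B ≤ c (x, -(n : ℝ)) := hB (Set.mem_range_self _)
    have h2 := hneg n
    simp only [nsmul_eq_mul] at hn
    nlinarith
  exact hcont.surjective htop hbot
end

section
/- Let X be a nonempty compact topological space, φ a flow on X, and c a positive continuous cocycle over φ. For each x ∈ X let ĉ(x,·) : ℝ → ℝ be the inverse of the bijection t ↦ c(x,t), so that c(x, ĉ(x,t)) = t and ĉ(x, c(x,t)) = t for all t. Define ψ_t(x) = φ_{ĉ(x,t)}(x). Then ψ is a flow in the algebraic sense, i.e. ψ_0 = id and ψ_{s+t} = ψ_s ∘ ψ_t for all s, t ∈ ℝ, and ĉ is a cocycle over ψ, i.e. ĉ(x, s+t) = ĉ(ψ_t(x), s) + ĉ(x, t) for all x ∈ X and s, t ∈ ℝ. -/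
/-- The reparametrization `ψ t x = φ (ĉ (x, t)) x` of a flow `φ` by the inverse `ĉ` of a
positive continuous cocycle `c` is an algebraic flow, and `ĉ` is a cocycle over `ψ`. -/
theorem reparametrization_is_flow_and_inverse_cocycle
    {X : Type*} [TopologicalSpace X] [CompactSpace X] [Nonempty X]
    (φ : Flow ℝ X) (c : X × ℝ → ℝ) (hc : Continuous c)
    (hcoc : ∀ (x : X) (s t : ℝ), c (x, s + t) = c (φ t x, s) + c (x, t))
    (hpos : ∀ (x : X) (t : ℝ), 0 < t → 0 < c (x, t))
    (chat : X × ℝ → ℝ)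
    (hinv₁ : ∀ (x : X) (t : ℝ), c (x, chat (x, t)) = t)
    (hinv₂ : ∀ (x : X) (t : ℝ), chat (x, c (x, t)) = t)
    (ψ : ℝ → X → X) (hψ : ∀ (t : ℝ) (x : X), ψ t x = φ (chat (x, t)) x) :
    (∀ x : X, ψ 0 x = x) ∧
    (∀ (s t : ℝ) (x : X), ψ (s + t) x = ψ s (ψ t x)) ∧
    (∀ (x : X) (s t : ℝ), chat (x, s + t) = chat (ψ t x, s) + chat (x, t)) := by
  have hc0 : ∀ x : X, c (x, 0) = 0 := by
    intro x
    have := hcoc x 0 0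
    simp only [add_zero, φ.map_zero_apply] at this
    linarith
  have hchat0 : ∀ x : X, chat (x, 0) = 0 := by
    intro x
    have := hinv₂ x 0
    rwa [hc0] at this
  have key : ∀ (x : X) (s t : ℝ), chat (x, s + t) = chat (ψ t x, s) + chat (x, t) := by
    intro x s t
    have h1 : c (x, chat (ψ t x, s) + chat (x, t)) = s + t := by
      rw [hcoc x _ (chat (x, t)), hinv₁, hψ, hinv₁]
    calc chat (x, s + t) = chat (x, c (x, chat (ψ t x, s) + chat (x, t))) := by rw [h1]
      _ = chat (ψ t x, s) + chat (x, t) := hinv₂ _ _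
  refine ⟨fun x => by rw [hψ, hchat0, φ.map_zero_apply], fun s t x => ?_, key⟩
  rw [hψ, key x s t, φ.map_add, hψ, hψ]
end
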